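/- Let c > 1, γ = 1/c, T > 0, v, r ∈ ℝ, m, q positive integers. With Y(l) = f(m+q, l) - f(m, l) where f(m, l) = r(ml)^c + v(T-(ml)^c)^γ, one has the identity l·Y'''(l) + (2 - c)·Y''(l) = -∫_m^{m+q} Θ(t) dt where Θ(t) = v(c-1) T t^{2c-1} l^{2c-2} (T - (tl)^c)^{γ-4} (2c(2c-1)T + (2c² - 3c + 1)(tl)^c), valid for all l > 0 with ((m+q)l)^c < T. -/

import Mathlib

/-!
Write `f(a, l) = F(a l)` with `F(u) = r u^c + v (T - u^c)^γ`. By the chain rule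
`l ∂³f + (2 - c) ∂²f = a² (u F''' + (2 - c) F'')(a l)`. The `r`-part is killed by this Euler
operator, and since `γ c = 1` the `v`-part collapses to `-(c-1)(2c-1) v T u^(2c-2) (T - u^c)^(γ-3)`.
Hence `l Y''' + (2 - c) Y'' = Φ(m) - Φ(m+q)` with
`Φ(a) = (c-1)(2c-1) v T l^(2c-2) a^(2c) (T - (a l)^c)^(γ-3)`, and `Θ = Φ'`, so the fundamental
theorem of calculus finishes the proof.
-/

open Real Set

section Profile

variable (c γ T r v : ℝ)

/-- `f(m, l) = profile c γ T r v (m * l)`. -/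
noncomputable def profile (u : ℝ) : ℝ := r * u ^ c + v * (T - u ^ c) ^ γ

noncomputable def profile' (u : ℝ) : ℝ :=
  r * c * u ^ (c - 1) - v * u ^ (c - 1) * (T - u ^ c) ^ (γ - 1)

noncomputable def profile'' (u : ℝ) : ℝ :=
  r * c * (c - 1) * u ^ (c - 2) - v * (c - 1) * T * u ^ (c - 2) * (T - u ^ c) ^ (γ - 2)

noncomputable def profile''' (u : ℝ) : ℝ :=
  r * c * (c - 1) * (c - 2) * u ^ (c - 3) - v * (c - 1) * T *
    ((c - 2) * u ^ (c - 3) * (T - u ^ c) ^ (γ - 2) +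
      (2 * c - 1) * u ^ (2 * c - 3) * (T - u ^ c) ^ (γ - 3))

noncomputable def profileGap (a₀ a₁ x : ℝ) : ℝ :=
  profile c γ T r v (a₁ * x) - profile c γ T r v (a₀ * x)

variable {c γ T r v} {u : ℝ}

theorem hasDerivAt_profile (hc : c ≠ 0) (hγ : γ = 1 / c) (hu : 0 < u) (huT : u ^ c < T) :
    HasDerivAt (profile c γ T r v) (profile' c γ T r v u) u := by
  have hW : 0 < T - u ^ c := sub_pos.2 huT
  have hpow := hasDerivAt_rpow_const (p := c) (Or.inl hu.ne')
  refine ((hpow.const_mul r).add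
    (((hpow.const_sub T).rpow_const (p := γ) (Or.inl hW.ne')).const_mul v)).congr_deriv ?_
  simp only [profile', rpow_sub_one hu.ne', rpow_sub_one hW.ne', hγ]
  field_simp
  ring

theorem hasDerivAt_profile' (hc : c ≠ 0) (hγ : γ = 1 / c) (hu : 0 < u) (huT : u ^ c < T) :
    HasDerivAt (profile' c γ T r v) (profile'' c γ T r v u) u := by
  have hW : 0 < T - u ^ c := sub_pos.2 huT
  have hpow (p : ℝ) := hasDerivAt_rpow_const (p := p) (Or.inl hu.ne')
  refine (((hpow _).const_mul (r * c)).sub (((hpow _).const_mul v).mul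
    (((hpow c).const_sub T).rpow_const (p := γ - 1) (Or.inl hW.ne')))).congr_deriv ?_
  simp only [profile'', rpow_sub hu, rpow_sub hW, rpow_one, rpow_ofNat, hγ]
  field_simp
  ring

theorem hasDerivAt_profile'' (hc : c ≠ 0) (hγ : γ = 1 / c) (hu : 0 < u) (huT : u ^ c < T) :
    HasDerivAt (profile'' c γ T r v) (profile''' c γ T r v u) u := by
  have hW : 0 < T - u ^ c := sub_pos.2 huT
  have hpow (p : ℝ) := hasDerivAt_rpow_const (p := p) (Or.inl hu.ne')
  refine (((hpow _).const_mul (r * c * (c - 1))).sub (((hpow _).const_mul (v * (c - 1) * T)).mul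
    (((hpow c).const_sub T).rpow_const (p := γ - 2) (Or.inl hW.ne')))).congr_deriv ?_
  have h2c : u ^ (2 * c) = (u ^ c) ^ 2 := by rw [mul_comm, rpow_mul hu.le, rpow_two]
  simp only [profile''', rpow_sub hu, rpow_sub hW, rpow_one, rpow_ofNat, h2c, hγ]
  field_simp
  ring

theorem mul_profile'''_add_profile'' (hu : 0 < u) :
    u * profile''' c γ T r v u + (2 - c) * profile'' c γ T r v u =
      -(v * (c - 1) * (2 * c - 1) * T * u ^ (2 * c - 2) * (T - u ^ c) ^ (γ - 3)) := by
  have h1 : u * u ^ (c - 3) = u ^ (c - 2) := by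
    rw [mul_comm, ← rpow_add_one hu.ne']; ring_nf
  have h2 : u * u ^ (2 * c - 3) = u ^ (2 * c - 2) := by
    rw [mul_comm, ← rpow_add_one hu.ne']; ring_nf
  simp only [profile''', profile'']
  linear_combination
    (r * c * (c - 1) * (c - 2) - v * (c - 1) * T * (c - 2) * (T - u ^ c) ^ (γ - 2)) * h1 -
      v * (c - 1) * T * (2 * c - 1) * (T - u ^ c) ^ (γ - 3) * h2

end Profile

theorem Set.EqOn.iteratedDeriv_succ_of_hasDerivAt {𝕜 F : Type*} [NontriviallyNormedField 𝕜]
    [NormedAddCommGroup F] [NormedSpace 𝕜 F] {f g g' : 𝕜 → F} {s : Set 𝕜} {n : ℕ}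
    (h : EqOn (iteratedDeriv n f) g s) (hs : IsOpen s) (hg : ∀ x ∈ s, HasDerivAt g (g' x) x) :
    EqOn (iteratedDeriv (n + 1) f) g' s := fun x hx => by
  rw [iteratedDeriv_succ, (h.eventuallyEq_of_mem (hs.mem_nhds hx)).deriv_eq]
  exact (hg x hx).deriv

theorem HasDerivAt.pow_mul_comp_mul {f : ℝ → ℝ} {f' a x : ℝ} (k : ℕ)
    (hf : HasDerivAt f f' (a * x)) :
    HasDerivAt (fun y => a ^ k * f (a * y)) (a ^ (k + 1) * f') x := by
  refine ((hf.comp x ((hasDerivAt_id x).const_mul a)).const_mul (a ^ k)).congr_deriv ?_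
  ring

theorem rpow_mul_lt_of_le {c T a₀ a₁ x : ℝ} (hc : 0 ≤ c) (ha₀ : 0 ≤ a₀) (ha : a₀ ≤ a₁)
    (hx : 0 ≤ x) (h : (a₁ * x) ^ c < T) : (a₀ * x) ^ c < T :=
  (rpow_le_rpow (by positivity) (by gcongr) hc).trans_lt h

section Gap

variable {c γ T r v a₀ a₁ : ℝ}

theorem hasDerivAt_sub_comp_mul {F F' : ℝ → ℝ}
    (hF : ∀ u, 0 < u → u ^ c < T → HasDerivAt F (F' u) u) (hc : 0 ≤ c) (ha₀ : 0 < a₀)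
    (ha : a₀ ≤ a₁) (k : ℕ) {x : ℝ} (hx : 0 < x) (hxT : (a₁ * x) ^ c < T) :
    HasDerivAt (fun y => a₁ ^ k * F (a₁ * y) - a₀ ^ k * F (a₀ * y))
      (a₁ ^ (k + 1) * F' (a₁ * x) - a₀ ^ (k + 1) * F' (a₀ * x)) x :=
  ((hF _ (mul_pos (ha₀.trans_le ha) hx) hxT).pow_mul_comp_mul k).sub
    ((hF _ (by positivity) (rpow_mul_lt_of_le hc ha₀.le ha hx.le hxT)).pow_mul_comp_mul k)

theorem iteratedDeriv_profileGap (hc : 0 < c) (hγ : γ = 1 / c) (ha₀ : 0 < a₀) (ha : a₀ ≤ a₁)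
    {x : ℝ} (hx : 0 < x) (hxT : (a₁ * x) ^ c < T) :
    iteratedDeriv 2 (profileGap c γ T r v a₀ a₁) x =
        a₁ ^ 2 * profile'' c γ T r v (a₁ * x) - a₀ ^ 2 * profile'' c γ T r v (a₀ * x) ∧
      iteratedDeriv 3 (profileGap c γ T r v a₀ a₁) x =
        a₁ ^ 3 * profile''' c γ T r v (a₁ * x) - a₀ ^ 3 * profile''' c γ T r v (a₀ * x) := by
  set S : Set ℝ := {y | 0 < y ∧ (a₁ * y) ^ c < T}
  have hS : IsOpen S := isOpen_Ioi.inter (isOpen_lt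
    ((continuous_const_mul a₁).rpow_const fun _ => Or.inr hc.le) continuous_const)
  have hD := fun {F F' : ℝ → ℝ} (hF : ∀ u, 0 < u → u ^ c < T → HasDerivAt F (F' u) u) (k : ℕ)
    (y : ℝ) (hy : y ∈ S) => hasDerivAt_sub_comp_mul hF hc.le ha₀ ha k hy.1 hy.2
  have h0 : EqOn (iteratedDeriv 0 (profileGap c γ T r v a₀ a₁))
      (fun y => a₁ ^ 0 * profile c γ T r v (a₁ * y) - a₀ ^ 0 * profile c γ T r v (a₀ * y)) S :=
    fun y _ => by simp [profileGap]
  have h2 := (h0.iteratedDeriv_succ_of_hasDerivAt hS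
    (hD (fun _ => hasDerivAt_profile hc.ne' hγ) 0)).iteratedDeriv_succ_of_hasDerivAt hS
    (hD (fun _ => hasDerivAt_profile' hc.ne' hγ) 1)
  exact ⟨h2 ⟨hx, hxT⟩, h2.iteratedDeriv_succ_of_hasDerivAt hS
    (hD (fun _ => hasDerivAt_profile'' hc.ne' hγ) 2) ⟨hx, hxT⟩⟩

end Gap

section Theta

variable (c γ T v l : ℝ)

noncomputable def theta (t : ℝ) : ℝ :=
  v * (c - 1) * T * t ^ (2 * c - 1) * l ^ (2 * c - 2) * (T - (t * l) ^ c) ^ (γ - 4) *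
    (2 * c * (2 * c - 1) * T + (2 * c ^ 2 - 3 * c + 1) * (t * l) ^ c)

noncomputable def thetaPrimitive (t : ℝ) : ℝ :=
  v * (c - 1) * (2 * c - 1) * T * l ^ (2 * c - 2) * (t ^ (2 * c) * (T - (t * l) ^ c) ^ (γ - 3))

variable {c γ T v l} {r : ℝ}

theorem hasDerivAt_thetaPrimitive (hc : c ≠ 0) (hγ : γ = 1 / c) (hl : 0 < l) {t : ℝ}
    (ht : 0 < t) (htT : (t * l) ^ c < T) :
    HasDerivAt (thetaPrimitive c γ T v l) (theta c γ T v l t) t := by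
  have htl : 0 < t * l := mul_pos ht hl
  have hW : 0 < T - (t * l) ^ c := sub_pos.2 htT
  have hQ := ((((hasDerivAt_id t).mul_const l).rpow_const (p := c) (Or.inl htl.ne')).const_sub
    T).rpow_const (p := γ - 3) (Or.inl hW.ne')
  refine (((hasDerivAt_rpow_const (p := 2 * c) (Or.inl ht.ne')).mul hQ).const_mul
    (v * (c - 1) * (2 * c - 1) * T * l ^ (2 * c - 2))).congr_deriv ?_
  simp only [theta, id, rpow_sub ht, rpow_sub htl, rpow_sub hW, rpow_one, rpow_ofNat, hγ]
  field_simp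
  ring

theorem integral_theta (hc : 0 < c) (hγ : γ = 1 / c) (hl : 0 < l) {a₀ a₁ : ℝ} (ha₀ : 0 < a₀)
    (ha : a₀ ≤ a₁) (hlT : (a₁ * l) ^ c < T) :
    ∫ t in a₀..a₁, theta c γ T v l t =
      thetaPrimitive c γ T v l a₁ - thetaPrimitive c γ T v l a₀ := by
  have hdom : ∀ t ∈ uIcc a₀ a₁, 0 < t ∧ (t * l) ^ c < T := fun t ht => by
    rw [uIcc_of_le ha] at ht
    exact ⟨ha₀.trans_le ht.1, rpow_mul_lt_of_le hc.le (ha₀.le.trans ht.1) ht.2 hl.le hlT⟩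
  refine intervalIntegral.integral_eq_sub_of_hasDerivAt
    (fun t ht => hasDerivAt_thetaPrimitive hc.ne' hγ hl (hdom t ht).1 (hdom t ht).2)
    (ContinuousOn.intervalIntegrable fun t ht => ?_)
  obtain ⟨ht, htT⟩ := hdom t ht
  have htl : t * l ≠ 0 := (mul_pos ht hl).ne'
  have hW : T - (t * l) ^ c ≠ 0 := (sub_pos.2 htT).ne'
  unfold theta
  fun_prop (disch := first | exact Or.inl ht.ne' | exact Or.inl htl | exact Or.inl hW)

theorem mul_iteratedDeriv_three_add_iteratedDeriv_two_profileGap (hc : 0 < c) (hγ : γ = 1 / c)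
    {a₀ a₁ : ℝ} (ha₀ : 0 < a₀) (ha : a₀ ≤ a₁) (hl : 0 < l) (hlT : (a₁ * l) ^ c < T) :
    l * iteratedDeriv 3 (profileGap c γ T r v a₀ a₁) l +
        (2 - c) * iteratedDeriv 2 (profileGap c γ T r v a₀ a₁) l =
      thetaPrimitive c γ T v l a₀ - thetaPrimitive c γ T v l a₁ := by
  have hscale {a : ℝ} (ha : 0 < a) : l * (a ^ 3 * profile''' c γ T r v (a * l)) +
      (2 - c) * (a ^ 2 * profile'' c γ T r v (a * l)) = -thetaPrimitive c γ T v l a := by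
    have key := mul_profile'''_add_profile'' (c := c) (γ := γ) (T := T) (r := r) (v := v)
      (mul_pos ha hl)
    have ha2 : a ^ (2 * c) = a ^ 2 * a ^ (2 * c - 2) := by
      rw [← rpow_natCast, ← rpow_add ha]; norm_num
    calc _ = a ^ 2 * (a * l * profile''' c γ T r v (a * l) +
          (2 - c) * profile'' c γ T r v (a * l)) := by ring
      _ = _ := by rw [key, thetaPrimitive, ha2, mul_rpow ha.le hl.le]; ring
  obtain ⟨h2, h3⟩ := iteratedDeriv_profileGap (r := r) (v := v) hc hγ ha₀ ha hl hlT
  rw [h2, h3]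
  linear_combination hscale (ha₀.trans_le ha) - hscale ha₀

end Theta

theorem stmt_19_general (c γ T v r : ℝ) (hc1 : 1 < c) (hγ : γ = 1 / c)
    (m q : ℕ) (hm : 0 < m) (l : ℝ) (hl : 0 < l)
    (hdom : (((m : ℝ) + q) * l) ^ c < T) :
    l * iteratedDeriv 3
        (fun x : ℝ =>
          (r * ((((m : ℝ) + q) * x)) ^ c + v * (T - (((m : ℝ) + q) * x) ^ c) ^ γ) -
          (r * ((m : ℝ) * x) ^ c + v * (T - ((m : ℝ) * x) ^ c) ^ γ)) l +
      (2 - c) * iteratedDeriv 2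
        (fun x : ℝ =>
          (r * ((((m : ℝ) + q) * x)) ^ c + v * (T - (((m : ℝ) + q) * x) ^ c) ^ γ) -
          (r * ((m : ℝ) * x) ^ c + v * (T - ((m : ℝ) * x) ^ c) ^ γ)) l =
      -∫ t in (m : ℝ)..((m : ℝ) + q),
        v * (c - 1) * T * t ^ (2 * c - 1) * l ^ (2 * c - 2) *
          (T - (t * l) ^ c) ^ (γ - 4) *
          (2 * c * (2 * c - 1) * T + (2 * c ^ 2 - 3 * c + 1) * (t * l) ^ c) := by
  have hc : 0 < c := by linarith
  have hm₀ : (0 : ℝ) < m := Nat.cast_pos.2 hm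
  have hmq : (m : ℝ) ≤ m + q := le_add_of_nonneg_right q.cast_nonneg
  have hΘ := integral_theta (v := v) hc hγ hl hm₀ hmq hdom
  unfold theta at hΘ
  rw [hΘ, neg_sub]
  exact mul_iteratedDeriv_three_add_iteratedDeriv_two_profileGap hc hγ hm₀ hmq hl hdom

/-- with `f(m, l) = r (ml)^c + v (T - (ml)^c)^γ`, `γ = 1/c`, and
`Y(l) = f(m+q, l) - f(m, l)`, one has
`l Y'''(l) + (2 - c) Y''(l) = -∫_m^{m+q} Θ(t) dt`, where
`Θ(t) = v (c-1) T t^{2c-1} l^{2c-2} (T - (tl)^c)^{γ-4} (2c(2c-1)T + (2c²-3c+1)(tl)^c)`,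
for all `l > 0` with `((m+q) l)^c < T`. -/
theorem stmt_19 (c γ T v r : ℝ) (hc1 : 1 < c) (hc2 : c < 2) (hγ : γ = 1 / c)
    (hT : 0 < T) (m q : ℕ) (hm : 0 < m) (hq : 0 < q) (l : ℝ) (hl : 0 < l)
    (hdom : (((m : ℝ) + q) * l) ^ c < T) :
    l * iteratedDeriv 3
        (fun x : ℝ =>
          (r * ((((m : ℝ) + q) * x)) ^ c + v * (T - (((m : ℝ) + q) * x) ^ c) ^ γ) -
          (r * ((m : ℝ) * x) ^ c + v * (T - ((m : ℝ) * x) ^ c) ^ γ)) l +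
      (2 - c) * iteratedDeriv 2
        (fun x : ℝ =>
          (r * ((((m : ℝ) + q) * x)) ^ c + v * (T - (((m : ℝ) + q) * x) ^ c) ^ γ) -
          (r * ((m : ℝ) * x) ^ c + v * (T - ((m : ℝ) * x) ^ c) ^ γ)) l =
      -∫ t in (m : ℝ)..((m : ℝ) + q),
        v * (c - 1) * T * t ^ (2 * c - 1) * l ^ (2 * c - 2) *
          (T - (t * l) ^ c) ^ (γ - 4) *
          (2 * c * (2 * c - 1) * T + (2 * c ^ 2 - 3 * c + 1) * (t * l) ^ c) :=
  stmt_19_general c γ T v r hc1 hγ m q hm l hl hdom
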